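/- With Ψ(u; s₁,…,s_d) the nonnegative kernel such that J_d(s₁,…,s_d; φ) = ∫_{s₁}^{s_d} φ^{(d)}(u) Ψ(u) du for all φ ∈ C^d (Lemma above), one has ∫_{s₁}^{s_d} Ψ(u) du = c_d · V(s₁,…,s_d), where c_d = (2! · 3! ⋯ (d−1)!)^{−1} and V is the Vandermonde product ∏_{1≤i<j≤d}(s_j − s_i). -/

import Mathlib

/-!
Test the integral representation against `φ(t) = t^d / d!`. Its `d`-th derivative is `1`, so the
right-hand side is `∫ Ψ`. Its derivative is `t^(d-1) / (d-1)!`, so the matrix defining `J_d` becomes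
the transposed Vandermonde matrix of `s` with row `i` scaled by `1 / i!`, whose determinant is
`V(s) / (0! 1! ⋯ (d-1)!)`.
-/

open MeasureTheory

/-- The matrix whose `j`-th column is `(1, s_j, s_j²/2!, …, s_j^{m-2}/(m-2)!, φ'(s_j))ᵀ`. -/
noncomputable def Jmat (m : ℕ) (s : Fin m → ℝ) (φ : ℝ → ℝ) : Matrix (Fin m) (Fin m) ℝ :=
  Matrix.of fun i j =>
    if i.val < m - 1 then s j ^ i.val / (Nat.factorial i.val) else deriv φ (s j)

/-- The generalized Vandermonde-type determinant `J_m(s₁,…,s_m; φ)`. -/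
noncomputable def Jdet (m : ℕ) (s : Fin m → ℝ) (φ : ℝ → ℝ) : ℝ := (Jmat m s φ).det

section

open Finset Matrix
open scoped Nat

theorem Nat.prod_fin_factorial_eq_prod_Icc (m : ℕ) :
    ∏ i : Fin m, (i : ℕ)! = ∏ k ∈ Icc 2 (m - 1), k ! := by
  rw [Fin.prod_univ_eq_prod_range (· !)]
  refine (prod_subset (fun k hk => ?_) fun k _ hk => ?_).symm
  · simp only [mem_Icc, mem_range] at hk ⊢
    omega
  · obtain rfl | rfl : k = 0 ∨ k = 1 := by simp only [mem_Icc, mem_range] at *; omega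
    all_goals rfl

theorem iteratedDeriv_pow_div_factorial (n : ℕ) (x : ℝ) :
    iteratedDeriv n (fun t : ℝ => t ^ n / n !) x = 1 := by
  rw [iteratedDeriv_div_const, iteratedDeriv_pow, Nat.descFactorial_self, Nat.sub_self, pow_zero,
    mul_one, div_self (by positivity)]

theorem deriv_pow_succ_div_factorial (n : ℕ) (x : ℝ) :
    deriv (fun t : ℝ => t ^ (n + 1) / (n + 1)!) x = x ^ n / n ! := by
  rw [deriv_div_const, deriv_pow_field, Nat.add_sub_cancel, Nat.factorial_succ, Nat.cast_mul]
  field_simp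

theorem det_of_pow_div_factorial {m : ℕ} (s : Fin m → ℝ) :
    (of fun i j : Fin m => s j ^ (i : ℕ) / (i : ℕ)!).det
      = (∏ i : Fin m, ((i : ℕ)! : ℝ))⁻¹ * ∏ i : Fin m, ∏ j ∈ Ioi i, (s j - s i) := by
  have hscaled : (of fun i j : Fin m => s j ^ (i : ℕ) / (i : ℕ)!)
      = of fun i j : Fin m => ((i : ℕ)! : ℝ)⁻¹ * (vandermonde s)ᵀ i j := by
    ext i j
    simp [div_eq_inv_mul]
  rw [hscaled, det_mul_column, det_transpose, det_vandermonde, prod_inv_distrib]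

theorem Jmat_pow_div_factorial (m : ℕ) (s : Fin m → ℝ) :
    Jmat m s (fun t => t ^ m / m !) = of fun i j : Fin m => s j ^ (i : ℕ) / (i : ℕ)! := by
  ext i j
  simp only [Jmat, of_apply]
  split_ifs with hi
  · rfl
  · obtain ⟨n, rfl⟩ : ∃ n, m = n + 1 := ⟨m - 1, by omega⟩
    rw [deriv_pow_succ_div_factorial, show (i : ℕ) = n by omega]

theorem Jdet_pow_div_factorial (m : ℕ) (s : Fin m → ℝ) :
    Jdet m s (fun t => t ^ m / m !)
      = (∏ k ∈ Icc 2 (m - 1), (k ! : ℝ))⁻¹ * ∏ i : Fin m, ∏ j ∈ Ioi i, (s j - s i) := by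
  rw [Jdet, Jmat_pow_div_factorial, det_of_pow_div_factorial, ← Nat.cast_prod, ← Nat.cast_prod,
    Nat.prod_fin_factorial_eq_prod_Icc]

end

theorem stmt9 (d : ℕ) (hd : 2 ≤ d) (s : Fin d → ℝ) (Ψ : ℝ → ℝ)
    (hrep : ∀ φ : ℝ → ℝ, ContDiff ℝ (d : ℕ∞) φ →
      Jdet d s φ =
        ∫ u in (s ⟨0, by omega⟩)..(s ⟨d - 1, by omega⟩), iteratedDeriv d φ u * Ψ u) :
    (∫ u in (s ⟨0, by omega⟩)..(s ⟨d - 1, by omega⟩), Ψ u)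
      = ((∏ k ∈ Finset.Icc 2 (d - 1), (Nat.factorial k : ℝ)))⁻¹ *
          ∏ i : Fin d, ∏ j ∈ Finset.Ioi i, (s j - s i) := by
  have hJ := hrep (fun t => t ^ d / d.factorial) ((contDiff_id.pow d).div_const _)
  simp only [iteratedDeriv_pow_div_factorial, one_mul] at hJ
  rw [← hJ, Jdet_pow_div_factorial]
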